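/- arXiv:2404.15328 — 3 statements merged into one kernel-verified Lean document; each statement's English description precedes it below -/
import Mathlib

section
/- Let d ≥ 1 and let X : ℝ → ℝ^d be a continuously differentiable path. For a word (i₁,…,i_k) ∈ {1,…,d}^k and real numbers a ≤ b, the signature coordinate is S^{i₁…i_k}_{[a,b]}(X) = ∫_{a < t₁ < ⋯ < t_k < b} (X^{i₁})'(t₁)⋯(X^{i_k})'(t_k) dt₁⋯dt_k, the iterated integral over the ordered simplex. Then for all a ≤ b ≤ c and every word (i₁,…,i_k), Chen's identity holds: S^{i₁…i_k}_{[a,c]}(X) = Σ_{j=0}^{k} S^{i₁…i_j}_{[a,b]}(X) · S^{i_{j+1}…i_k}_{[b,c]}(X), where by convention the signature coordinate of the empty word equals 1. -/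
open MeasureTheory

noncomputable def sigRev {d : ℕ} (X : ℝ → Fin d → ℝ) (a : ℝ) : List (Fin d) → ℝ → ℝ
  | [], _ => 1
  | i :: w, b => ∫ t in a..b, sigRev X a w t * deriv (fun s => X s i) t

noncomputable def sigCoord {d : ℕ} (X : ℝ → Fin d → ℝ) (a b : ℝ) (w : List (Fin d)) : ℝ :=
  sigRev X a w.reverse b

lemma contDeriv {d : ℕ} {X : ℝ → Fin d → ℝ} (hX : ContDiff ℝ 1 X) (i : Fin d) :
    Continuous (deriv fun s => X s i) :=
  (contDiff_pi.mp hX i).continuous_deriv le_rfl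

lemma contSigRev {d : ℕ} {X : ℝ → Fin d → ℝ} (hX : ContDiff ℝ 1 X) (a : ℝ) :
    ∀ w : List (Fin d), Continuous (sigRev X a w)
  | [] => continuous_const
  | i :: w => by
      have h := (contSigRev hX a w).mul (contDeriv hX i)
      exact intervalIntegral.continuous_primitive (fun x y => h.intervalIntegrable x y) a

lemma contSigCoord {d : ℕ} {X : ℝ → Fin d → ℝ} (hX : ContDiff ℝ 1 X) (a : ℝ)
    (w : List (Fin d)) : Continuous (fun t => sigCoord X a t w) :=
  contSigRev hX a w.reverse

lemma sig_append {d : ℕ} (X : ℝ → Fin d → ℝ) (a b : ℝ) (u : List (Fin d)) (i : Fin d) :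
    sigCoord X a b (u ++ [i]) = ∫ t in a..b, sigCoord X a t u * deriv (fun s => X s i) t := by
  simp [sigCoord, List.reverse_append, sigRev]

lemma chen_aux {d : ℕ} {X : ℝ → Fin d → ℝ} (hX : ContDiff ℝ 1 X) (a b : ℝ) :
    ∀ (w : List (Fin d)) (c : ℝ),
      sigCoord X a c w =
        ∑ j ∈ Finset.range (w.length + 1),
          sigCoord X a b (w.take j) * sigCoord X b c (w.drop j) := by
  intro w
  induction w using List.reverseRecOn with
  | nil => intro c; simp [sigCoord, sigRev]
  | append_singleton u i ih =>
    intro c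
    set f := deriv (fun s => X s i) with hf
    have hcf : Continuous f := contDeriv hX i
    have hint : ∀ p q : ℝ, IntervalIntegrable (fun t => sigCoord X a t u * f t) volume p q :=
      fun p q => ((contSigCoord hX a u).mul hcf).intervalIntegrable p q
    have hsplit : (∫ t in a..c, sigCoord X a t u * f t)
        = (∫ t in a..b, sigCoord X a t u * f t) + ∫ t in b..c, sigCoord X a t u * f t :=
      (intervalIntegral.integral_add_adjacent_intervals (hint a b) (hint b c)).symm
    have h2 : (∫ t in b..c, sigCoord X a t u * f t)
        = ∑ j ∈ Finset.range (u.length + 1),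
            sigCoord X a b (u.take j) * sigCoord X b c (u.drop j ++ [i]) := by
      have heq : (fun t => sigCoord X a t u * f t)
          = fun t => ∑ j ∈ Finset.range (u.length + 1),
              sigCoord X a b (u.take j) * (sigCoord X b t (u.drop j) * f t) := by
        funext t
        rw [ih t, Finset.sum_mul]
        simp [mul_assoc]
      rw [heq, intervalIntegral.integral_finset_sum]
      · refine Finset.sum_congr rfl fun j _ => ?_
        rw [intervalIntegral.integral_const_mul, sig_append]
      · intro j _
        exact (continuous_const.mul ((contSigCoord hX b (u.drop j)).mul hcf)).intervalIntegrable b c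
    rw [sig_append, hsplit, h2, ← sig_append]
    rw [List.length_append, List.length_singleton]
    conv_rhs => rw [Finset.sum_range_succ]
    have hlast : (u ++ [i]).take (u.length + 1) = u ++ [i] := by simp
    have hlast2 : (u ++ [i]).drop (u.length + 1) = [] := by simp
    rw [hlast, hlast2]
    have hempty : sigCoord X b c [] = 1 := rfl
    rw [hempty, mul_one, add_comm]
    congr 1
    refine Finset.sum_congr rfl fun j hj => ?_
    have hj' : j ≤ u.length := by
      have := Finset.mem_range.mp hj; omega
    rw [List.take_append_of_le_length hj', List.drop_append_of_le_length hj']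

/-- **Chen's identity** for a continuously differentiable path `X : ℝ → ℝ^d`:
for `a ≤ b ≤ c` and every word `(i₁,…,i_k)`,
`S^{i₁…i_k}_{[a,c]}(X) = Σ_{j=0}^{k} S^{i₁…i_j}_{[a,b]}(X) · S^{i_{j+1}…i_k}_{[b,c]}(X)`. -/
theorem chen_identity (d : ℕ) (hd : 1 ≤ d) (X : ℝ → Fin d → ℝ)
    (hX : ContDiff ℝ 1 X) (a b c : ℝ) (hab : a ≤ b) (hbc : b ≤ c)
    (w : List (Fin d)) :
    sigCoord X a c w =
      ∑ j ∈ Finset.range (w.length + 1),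
        sigCoord X a b (w.take j) * sigCoord X b c (w.drop j) := by
  exact chen_aux hX a b w c
end

section
/- Let a ≤ b ≤ c and let X : [a,b] → ℝ^d and Y : [b,c] → ℝ^d be continuous paths that are differentiable with continuous derivative except at finitely many points, with integrable derivatives X' and Y'. Define the concatenation X∗Y : [a,c] → ℝ^d by (X∗Y)(t) = X(t) for t ∈ [a,b] and (X∗Y)(t) = Y(t) − Y(b) + X(b) for t ∈ [b,c]; its almost-everywhere derivative is X' on (a,b) and Y' on (b,c). Then for every word (i₁,…,i_k) ∈ {1,…,d}^k, the signature coordinate of the concatenation satisfies Chen's identity: S^{i₁…i_k}_{[a,c]}(X∗Y) = Σ_{j=0}^{k} S^{i₁…i_j}_{[a,b]}(X) · S^{i_{j+1}…i_k}_{[b,c]}(Y), where the signature coordinate of the empty word equals 1. -/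
/-!
Splitting off the last letter `i` of a word, `S^{w i}_{[a,t]}(Z) = ∫_a^t S^w_{[a,s]}(Z) dZ^i_s`.
Splitting this integral at `b` and inducting on the word gives Chen's identity for a single path
`Z` cut at `b`; it only needs the components of `Z'` to be integrable. Iterated integrals see a path
only through its derivative, and the derivative of `X ∗ Y` is `X'` on `(a,b)` and `Y'` on `(b,c)`,
so the pieces of `Z` may be replaced by `X` and `Y`.
-/

open MeasureTheory Set

lemma intervalIntegrable_deriv_apply {ι : Type*} [Fintype ι] {X : ℝ → ι → ℝ} {a b : ℝ}
    (hab : a ≤ b) {s : Set ℝ} (hs : s.Countable)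
    (hX : ∀ t ∈ Ioo a b \ s, DifferentiableAt ℝ X t)
    (hX' : IntervalIntegrable (deriv X) volume a b) (i : ι) :
    IntervalIntegrable (deriv fun t => X t i) volume a b := by
  have hcomp : IntervalIntegrable (fun t => deriv X t i) volume a b :=
    intervalIntegrable_iff.2 ((intervalIntegrable_iff.1 hX').eval i)
  refine hcomp.congr_ae ?_
  have hnull : ∀ᵐ t : ℝ, t ∉ insert b s :=
    measure_eq_zero_iff_ae_notMem.1 ((hs.insert b).measure_zero _)
  rw [uIoc_of_le hab]
  filter_upwards [ae_restrict_mem measurableSet_Ioc, ae_restrict_of_ae hnull] with t ht hts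
  rw [mem_insert_iff, not_or] at hts
  have ht' : t ∈ Ioo a b \ s := ⟨⟨ht.1, ht.2.lt_of_ne hts.1⟩, hts.2⟩
  exact (hasDerivAt_pi.1 (hX t ht').hasDerivAt i).deriv.symm

section Signature

variable {d : ℕ}

@[simp]
lemma sigRev_nil (P : ℝ → Fin d → ℝ) (a t : ℝ) : sigRev P a [] t = 1 := rfl

lemma continuousOn_sigRev {P : ℝ → Fin d → ℝ} {a b : ℝ} (hab : a ≤ b)
    (hP : ∀ i, IntervalIntegrable (deriv fun t => P t i) volume a b) (v : List (Fin d)) :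
    ContinuousOn (sigRev P a v) (Icc a b) := by
  induction v with
  | nil => exact continuousOn_const
  | cons j v ih =>
    rw [← uIcc_of_le hab] at ih ⊢
    exact intervalIntegral.continuousOn_primitive_interval' ((hP j).continuousOn_mul ih)
      left_mem_uIcc

lemma intervalIntegrable_sigRev_mul_deriv {P : ℝ → Fin d → ℝ} {a b : ℝ} (hab : a ≤ b)
    (hP : ∀ i, IntervalIntegrable (deriv fun t => P t i) volume a b) (v : List (Fin d))
    (i : Fin d) :
    IntervalIntegrable (fun t => sigRev P a v t * deriv (fun s => P s i) t) volume a b :=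
  (hP i).continuousOn_mul (uIcc_of_le hab ▸ continuousOn_sigRev hab hP v)

lemma sigRev_eqOn_of_eqOn_deriv {P Q : ℝ → Fin d → ℝ} {a b : ℝ}
    (h : ∀ i, EqOn (deriv fun t => P t i) (deriv fun t => Q t i) (Ioo a b))
    (v : List (Fin d)) : EqOn (sigRev P a v) (sigRev Q a v) (Icc a b) := by
  induction v with
  | nil => exact fun _ _ => rfl
  | cons i v ih =>
    intro t ht
    refine intervalIntegral.integral_congr_Ioo_of_le ht.1 fun s hs => ?_
    have hs' : s ∈ Ioo a b := ⟨hs.1, hs.2.trans_le ht.2⟩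
    simp only [ih (Ioo_subset_Icc_self hs'), h i hs']

lemma sigRev_eq_sum {P : ℝ → Fin d → ℝ} {a b c : ℝ} (hab : a ≤ b) (hbc : b ≤ c)
    (hP : ∀ i, IntervalIntegrable (deriv fun t => P t i) volume a c) (v : List (Fin d)) :
    ∀ t ∈ Icc b c, sigRev P a v t = ∑ m ∈ Finset.range (v.length + 1),
      sigRev P a (v.drop m) b * sigRev P b (v.take m) t := by
  have hac := hab.trans hbc
  have hPbc : ∀ i, IntervalIntegrable (deriv fun t => P t i) volume b c := fun i =>
    (hP i).mono_set (by rw [uIcc_of_le hac, uIcc_of_le hbc]; exact Icc_subset_Icc_left hab)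
  induction v with
  | nil => intro t _; simp
  | cons i v ih =>
    intro t ht
    have hf := intervalIntegrable_sigRev_mul_deriv hac hP v i
    have hhead : IntervalIntegrable (fun s => sigRev P a v s * deriv (fun u => P u i) s)
        volume a b :=
      hf.mono_set (by rw [uIcc_of_le hac, uIcc_of_le hab]; exact Icc_subset_Icc_right hbc)
    have hsub : uIcc b t ⊆ uIcc b c := by
      rw [uIcc_of_le ht.1, uIcc_of_le hbc]; exact Icc_subset_Icc_right ht.2
    have htail : ∫ s in b..t, sigRev P a v s * deriv (fun u => P u i) s
        = ∑ m ∈ Finset.range (v.length + 1),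
            sigRev P a (v.drop m) b * sigRev P b (i :: v.take m) t := by
      have hterm : ∀ m, IntervalIntegrable
          (fun s => sigRev P a (v.drop m) b * (sigRev P b (v.take m) s * deriv (P · i) s))
          volume b t := fun m =>
        ((intervalIntegrable_sigRev_mul_deriv hbc hPbc (v.take m) i).const_mul _).mono_set hsub
      calc ∫ s in b..t, sigRev P a v s * deriv (fun u => P u i) s
          = ∫ s in b..t, ∑ m ∈ Finset.range (v.length + 1),
              sigRev P a (v.drop m) b * (sigRev P b (v.take m) s * deriv (P · i) s) := by
            refine intervalIntegral.integral_congr fun s hs => ?_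
            rw [uIcc_of_le ht.1] at hs
            simp only [ih s ⟨hs.1, hs.2.trans ht.2⟩, Finset.sum_mul, mul_assoc]
        _ = _ := by
            rw [intervalIntegral.integral_finsetSum fun m _ => hterm m]
            simp only [intervalIntegral.integral_const_mul, sigRev]
    have hmid : IntervalIntegrable (fun s => sigRev P a v s * deriv (fun u => P u i) s)
        volume b t :=
      (hf.mono_set (by rw [uIcc_of_le hac, uIcc_of_le hbc]; exact Icc_subset_Icc_left hab)).mono_set
        hsub
    rw [sigRev, ← intervalIntegral.integral_add_adjacent_intervals hhead hmid, htail,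
      List.length_cons, Finset.sum_range_succ' _ (v.length + 1)]
    simp only [List.take_succ_cons, List.drop_succ_cons, List.take_zero, List.drop_zero,
      sigRev_nil, mul_one]
    exact add_comm _ _

lemma sigCoord_eq_sum {P : ℝ → Fin d → ℝ} {a b c : ℝ} (hab : a ≤ b) (hbc : b ≤ c)
    (hP : ∀ i, IntervalIntegrable (deriv fun t => P t i) volume a c) (w : List (Fin d)) :
    sigCoord P a c w = ∑ j ∈ Finset.range (w.length + 1),
      sigCoord P a b (w.take j) * sigCoord P b c (w.drop j) := by
  rw [sigCoord, sigRev_eq_sum hab hbc hP _ c ⟨hbc, le_rfl⟩, List.length_reverse,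
    ← Finset.sum_range_reflect]
  refine Finset.sum_congr rfl fun j hj => ?_
  have hj' : w.length + 1 - 1 - j = w.length - j := by omega
  rw [hj', sigCoord, sigCoord, List.reverse_take, List.reverse_drop]

end Signature

theorem chen_identity_concat_general (d : ℕ) (a b c : ℝ) (hab : a ≤ b) (hbc : b ≤ c)
    (X Y : ℝ → Fin d → ℝ)
    (sX sY : Set ℝ) (hsX : sX.Finite) (hsY : sY.Finite)
    (hXd : ∀ t ∈ Set.Ioo a b \ sX, DifferentiableAt ℝ X t)
    (hYd : ∀ t ∈ Set.Ioo b c \ sY, DifferentiableAt ℝ Y t)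
    (hXi : IntervalIntegrable (deriv X) volume a b)
    (hYi : IntervalIntegrable (deriv Y) volume b c)
    (Z : ℝ → Fin d → ℝ)
    (hZ : ∀ t, Z t = if t ≤ b then X t else Y t - Y b + X b)
    (w : List (Fin d)) :
    sigCoord Z a c w =
      ∑ j ∈ Finset.range (w.length + 1),
        sigCoord X a b (w.take j) * sigCoord Y b c (w.drop j) := by
  have hZX : ∀ i, EqOn (deriv fun t => Z t i) (deriv fun t => X t i) (Ioo a b) := fun i t ht =>
    Filter.EventuallyEq.deriv_eq <| by
      filter_upwards [Iio_mem_nhds ht.2] with s hs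
      rw [hZ, if_pos hs.le]
  have hZY : ∀ i, EqOn (deriv fun t => Z t i) (deriv fun t => Y t i) (Ioo b c) := fun i t ht => by
    have hZt : (fun s => Z s i) =ᶠ[nhds t] fun s => Y s i + (X b i - Y b i) := by
      filter_upwards [Ioi_mem_nhds ht.1] with s hs
      rw [hZ, if_neg (not_le.2 hs), Pi.add_apply, Pi.sub_apply]
      ring
    rw [hZt.deriv_eq, deriv_add_const]
  have hZi : ∀ i, IntervalIntegrable (deriv fun t => Z t i) volume a c := fun i =>
    ((intervalIntegrable_deriv_apply hab hsX.countable hXd hXi i).congr_uIoo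
        (uIoo_of_le hab ▸ (hZX i).symm)).trans
      ((intervalIntegrable_deriv_apply hbc hsY.countable hYd hYi i).congr_uIoo
        (uIoo_of_le hbc ▸ (hZY i).symm))
  rw [sigCoord_eq_sum hab hbc hZi]
  refine Finset.sum_congr rfl fun j _ => ?_
  unfold sigCoord
  rw [sigRev_eqOn_of_eqOn_deriv hZX _ ⟨hab, le_rfl⟩,
    sigRev_eqOn_of_eqOn_deriv hZY _ ⟨hbc, le_rfl⟩]

/-- **Chen's identity for concatenations.**  Let `a ≤ b ≤ c` and let `X` (on `[a,b]`) and
`Y` (on `[b,c]`) be continuous paths that are differentiable with continuous derivative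
except at finitely many points, with integrable derivatives.  Let `Z = X ∗ Y` be the
concatenation, `Z t = X t` for `t ≤ b` and `Z t = Y t - Y b + X b` for `t > b` (so its
a.e. derivative is `X'` on `(a,b)` and `Y'` on `(b,c)`).  Then for every word
`(i₁,…,i_k)`,
`S^{i₁…i_k}_{[a,c]}(X∗Y) = Σ_{j=0}^{k} S^{i₁…i_j}_{[a,b]}(X) · S^{i_{j+1}…i_k}_{[b,c]}(Y)`. -/
theorem chen_identity_concat (d : ℕ) (a b c : ℝ) (hab : a ≤ b) (hbc : b ≤ c)
    (X Y : ℝ → Fin d → ℝ)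
    (sX sY : Set ℝ) (hsX : sX.Finite) (hsY : sY.Finite)
    (hXc : ContinuousOn X (Set.Icc a b))
    (hYc : ContinuousOn Y (Set.Icc b c))
    (hXd : ∀ t ∈ Set.Ioo a b \ sX, DifferentiableAt ℝ X t)
    (hYd : ∀ t ∈ Set.Ioo b c \ sY, DifferentiableAt ℝ Y t)
    (hXd' : ContinuousOn (deriv X) (Set.Ioo a b \ sX))
    (hYd' : ContinuousOn (deriv Y) (Set.Ioo b c \ sY))
    (hXi : IntervalIntegrable (deriv X) volume a b)
    (hYi : IntervalIntegrable (deriv Y) volume b c)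
    (Z : ℝ → Fin d → ℝ)
    (hZ : ∀ t, Z t = if t ≤ b then X t else Y t - Y b + X b)
    (w : List (Fin d)) :
    sigCoord Z a c w =
      ∑ j ∈ Finset.range (w.length + 1),
        sigCoord X a b (w.take j) * sigCoord Y b c (w.drop j) :=
  chen_identity_concat_general d a b c hab hbc X Y sX sY hsX hsY hXd hYd hXi hYi Z hZ w
end

section
/- Let X, Y : [a,b] → ℝ^d be continuously differentiable paths with X(a) = Y(a), and let X̃, Ỹ : [a,b] → ℝ^{d+1} be their time augmentations X̃(t) = (t, X(t)) and Ỹ(t) = (t, Y(t)) (so that the first coordinate of each augmented path is strictly increasing). If all signature coordinates of the augmented paths agree, i.e., S^{i₁…i_k}_{[a,b]}(X̃) = S^{i₁…i_k}_{[a,b]}(Ỹ) for every k ∈ ℕ and every word (i₁,…,i_k) ∈ {1,…,d+1}^k, then X = Y on [a,b]. In other words, for paths possessing a strictly monotone coordinate, the full signature together with the starting point uniquely determines the path. -/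
open MeasureTheory

/-- The time augmentation `X̃(t) = (t, X(t)) ∈ ℝ^{d+1}` of a path `X : ℝ → ℝ^d`;
its first coordinate is strictly increasing. -/
noncomputable def timeAug {d : ℕ} (X : ℝ → Fin d → ℝ) : ℝ → Fin (d + 1) → ℝ :=
  fun t => Fin.cons t (X t)

/-!
The signature coordinate of the time-augmented path along the letter of `X^i` followed by `k`
time letters is the `k`-fold iterated time integral of the increment `X^i - X^i(a)`, so by
Cauchy's formula for repeated integration the signature determines every moment
`∫_a^b (b - s)^k (X^i(s) - X^i(a)) ds`. Equal signatures and starting points therefore make the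
continuous function `X^i - Y^i` orthogonal to all polynomials on `[a, b]`; by Weierstrass
approximation it is orthogonal to itself, hence zero.
-/

open Set intervalIntegral
open scoped Nat Interval

noncomputable def primitiveFrom (a : ℝ) (g : ℝ → ℝ) : ℝ → ℝ :=
  fun t => ∫ s in a..t, g s

section Primitive

variable {a : ℝ} {g : ℝ → ℝ}

@[simp]
lemma primitiveFrom_self (a : ℝ) (g : ℝ → ℝ) : primitiveFrom a g a = 0 :=
  integral_same

lemma hasDerivAt_primitiveFrom (hg : Continuous g) (t : ℝ) :
    HasDerivAt (primitiveFrom a g) (g t) t :=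
  (hg.integral_hasStrictDerivAt a t).hasDerivAt

lemma continuous_primitiveFrom (hg : Continuous g) : Continuous (primitiveFrom a g) :=
  continuous_iff_continuousAt.2 fun t => (hasDerivAt_primitiveFrom hg t).continuousAt

/-- Cauchy's formula for repeated integration. -/
theorem integral_sub_pow_mul_eq_factorial_mul_iterate_primitiveFrom (b : ℝ) (k : ℕ)
    (hg : Continuous g) :
    ∫ s in a..b, (b - s) ^ k * g s = k ! * (primitiveFrom a)^[k + 1] g b := by
  induction k generalizing g with
  | zero => simp [primitiveFrom]
  | succ k ih =>
    have hu : ∀ s, HasDerivAt (fun s => (b - s) ^ (k + 1)) (-((k + 1) * (b - s) ^ k)) s := by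
      intro s
      simpa using ((hasDerivAt_id s).const_sub b).fun_pow (k + 1)
    have by_parts := integral_mul_deriv_eq_deriv_mul (fun s _ => hu s)
      (fun s _ => hasDerivAt_primitiveFrom (a := a) hg s)
      (by apply Continuous.intervalIntegrable; fun_prop) (hg.intervalIntegrable a b)
    calc ∫ s in a..b, (b - s) ^ (k + 1) * g s
        = (k + 1) * ∫ s in a..b, (b - s) ^ k * primitiveFrom a g s := by
          simp [by_parts, intervalIntegral.integral_neg, ← intervalIntegral.integral_const_mul,
            mul_assoc]
      _ = (k + 1)! * (primitiveFrom a)^[k + 2] g b := by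
          rw [ih (continuous_primitiveFrom hg), Nat.factorial_succ,
            ← Function.iterate_succ_apply]
          push_cast
          ring

end Primitive

section TimeAugmentation

variable {d : ℕ} (X : ℝ → Fin d → ℝ) (a : ℝ)

lemma sigRev_timeAug_zero_cons (w : List (Fin (d + 1))) :
    sigRev (timeAug X) a (0 :: w) = primitiveFrom a (sigRev (timeAug X) a w) := by
  funext t
  simp [sigRev, primitiveFrom, timeAug]

lemma sigRev_timeAug_succ_singleton (i : Fin d) (hX : ContDiff ℝ 1 fun t => X t i) :
    sigRev (timeAug X) a [i.succ] = fun t => X t i - X a i := by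
  funext t
  simpa [sigRev, timeAug] using integral_deriv_eq_sub
    (fun t _ => (hX.differentiable one_ne_zero).differentiableAt)
    ((hX.continuous_deriv le_rfl).intervalIntegrable a t)

lemma sigCoord_timeAug_succ_cons_replicate_zero (i : Fin d) (hX : ContDiff ℝ 1 fun t => X t i)
    (b : ℝ) (k : ℕ) :
    sigCoord (timeAug X) a b (i.succ :: List.replicate k 0) =
      (primitiveFrom a)^[k] (fun t => X t i - X a i) b := by
  suffices sigRev (timeAug X) a (List.replicate k 0 ++ [i.succ]) =
      (primitiveFrom a)^[k] (fun t => X t i - X a i) by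
    simp [sigCoord, this]
  induction k with
  | zero => exact sigRev_timeAug_succ_singleton X a i hX
  | succ k ih =>
    rw [List.replicate_succ, List.cons_append, sigRev_timeAug_zero_cons, ih,
      Function.iterate_succ_apply']

theorem integral_sub_pow_mul_increment_eq_sigCoord (i : Fin d)
    (hX : ContDiff ℝ 1 fun t => X t i) (b : ℝ) (k : ℕ) :
    ∫ s in a..b, (b - s) ^ k * (X s i - X a i) =
      k ! * sigCoord (timeAug X) a b (i.succ :: List.replicate (k + 1) 0) := by
  rw [sigCoord_timeAug_succ_cons_replicate_zero X a i hX]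
  exact integral_sub_pow_mul_eq_factorial_mul_iterate_primitiveFrom b k
    (hX.continuous.sub continuous_const)

end TimeAugmentation

section Moments

open Polynomial

variable {a b : ℝ} {f : ℝ → ℝ}

lemma integral_eval_mul_eq_zero_of_integral_sub_pow_mul_eq_zero (c : ℝ)
    (hf : IntervalIntegrable f volume a b) (h : ∀ k : ℕ, ∫ s in a..b, (c - s) ^ k * f s = 0)
    (p : ℝ[X]) : ∫ s in a..b, p.eval s * f s = 0 := by
  have hp : ∀ s, p.eval s = (p.comp (C c - X)).eval (c - s) := by simp
  simp_rw [hp, eval_eq_sum_range, Finset.sum_mul, mul_assoc]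
  rw [integral_finsetSum fun k _ => (hf.continuousOn_mul (by fun_prop)).const_mul _]
  exact Finset.sum_eq_zero fun k _ => by rw [intervalIntegral.integral_const_mul, h k, mul_zero]

lemma integral_mul_eq_zero_of_integral_eval_mul_eq_zero (hab : a ≤ b) {g : ℝ → ℝ}
    (hf : ContinuousOn f (Icc a b)) (hg : ContinuousOn g (Icc a b))
    (h : ∀ p : ℝ[X], ∫ s in a..b, p.eval s * g s = 0) :
    ∫ s in a..b, f s * g s = 0 := by
  obtain ⟨M, hM⟩ := isCompact_Icc.exists_bound_of_continuousOn hg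
  have hM0 : 0 ≤ M := (norm_nonneg _).trans (hM a ⟨le_rfl, hab⟩)
  refine eq_of_forall_dist_le fun ε hε => ?_
  set δ := ε / (M * (b - a) + 1)
  have hden : 0 < M * (b - a) + 1 := by nlinarith
  have hδ : 0 < δ := div_pos hε hden
  obtain ⟨p, hp⟩ := exists_polynomial_near_of_continuousOn a b f hf δ hδ
  have hfg : ∫ s in a..b, f s * g s = ∫ s in a..b, (f s - p.eval s) * g s := by
    simp_rw [sub_mul]
    rw [integral_sub (f := fun s => f s * g s) (g := fun s => p.eval s * g s)
      ((hf.mul hg).intervalIntegrable_of_Icc hab)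
      ((p.continuousOn.mul hg).intervalIntegrable_of_Icc hab), h p, sub_zero]
  have hbound : ∀ s ∈ Ι a b, ‖(f s - p.eval s) * g s‖ ≤ δ * M := fun s hs => by
    have hs : s ∈ Icc a b := Ioc_subset_Icc_self (uIoc_of_le hab ▸ hs)
    rw [norm_mul, Real.norm_eq_abs, abs_sub_comm]
    exact mul_le_mul (hp s hs).le (hM s hs) (norm_nonneg _) hδ.le
  calc dist (∫ s in a..b, f s * g s) 0
      = ‖∫ s in a..b, (f s - p.eval s) * g s‖ := by rw [dist_zero_right, hfg]
    _ ≤ δ * M * |b - a| := norm_integral_le_of_norm_le_const hbound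
    _ = ε - δ := by
      rw [abs_of_nonneg (sub_nonneg.2 hab)]
      linear_combination div_mul_cancel₀ ε hden.ne'
    _ ≤ ε := by linarith

lemma eqOn_zero_of_integral_eval_mul_eq_zero (hab : a < b) (hf : ContinuousOn f (Icc a b))
    (h : ∀ p : ℝ[X], ∫ s in a..b, p.eval s * f s = 0) : EqOn f 0 (Icc a b) := by
  intro t ht
  by_contra hne
  have hpos := integral_pos (f := fun s => f s * f s) hab (hf.mul hf)
    (fun s _ => mul_self_nonneg (f s)) ⟨t, ht, mul_self_pos.2 hne⟩
  rw [integral_mul_eq_zero_of_integral_eval_mul_eq_zero hab.le hf hf h] at hpos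
  exact lt_irrefl 0 hpos

end Moments

/-- **Uniqueness of signatures for time-augmented paths.**  If `X, Y` are continuously
differentiable paths with `X(a) = Y(a)` and all signature coordinates of their time
augmentations agree on `[a,b]` (for every word over `{1,…,d+1}`), then `X = Y` on `[a,b]`:
the full signature of a path with a strictly monotone coordinate, together with the
starting point, determines the path. -/
theorem sig_determines_path (d : ℕ) (a b : ℝ) (hab : a ≤ b)
    (X Y : ℝ → Fin d → ℝ)
    (hX : ContDiff ℝ 1 X) (hY : ContDiff ℝ 1 Y)
    (h0 : X a = Y a)
    (hsig : ∀ w : List (Fin (d + 1)),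
      sigCoord (timeAug X) a b w = sigCoord (timeAug Y) a b w) :
    ∀ t ∈ Set.Icc a b, X t = Y t := by
  intro t ht
  rcases hab.eq_or_lt with rfl | hlt
  · rw [le_antisymm ht.2 ht.1, h0]
  funext i
  have hXi : ContDiff ℝ 1 fun s => X s i := contDiff_pi.mp hX i
  have hYi : ContDiff ℝ 1 fun s => Y s i := contDiff_pi.mp hY i
  have hdiff : Continuous fun s => X s i - Y s i := hXi.continuous.sub hYi.continuous
  have hmoments (k : ℕ) : ∫ s in a..b, (b - s) ^ k * (X s i - Y s i) = 0 :=
    calc ∫ s in a..b, (b - s) ^ k * (X s i - Y s i)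
        = ∫ s in a..b, ((b - s) ^ k * (X s i - X a i) - (b - s) ^ k * (Y s i - Y a i)) := by
          refine integral_congr fun s _ => ?_
          simp only [h0]
          ring
      _ = k ! * sigCoord (timeAug X) a b (i.succ :: List.replicate (k + 1) 0)
          - k ! * sigCoord (timeAug Y) a b (i.succ :: List.replicate (k + 1) 0) := by
          rw [intervalIntegral.integral_sub (by apply Continuous.intervalIntegrable; fun_prop)
              (by apply Continuous.intervalIntegrable; fun_prop),
            integral_sub_pow_mul_increment_eq_sigCoord X a i hXi,
            integral_sub_pow_mul_increment_eq_sigCoord Y a i hYi]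
      _ = 0 := by rw [hsig, sub_self]
  exact sub_eq_zero.1 <| eqOn_zero_of_integral_eval_mul_eq_zero hlt hdiff.continuousOn
    (integral_eval_mul_eq_zero_of_integral_sub_pow_mul_eq_zero b
      (hdiff.intervalIntegrable a b) hmoments) ht
end
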